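/- arXiv:0706.3918 — 5 statements merged into one kernel-verified Lean document; each statement's English description precedes it below -/
import Mathlib

section
/- Call a word standard if it has the form x₁^{a₁}x₂^{b₁}⋯x₁^{a_m}x₂^{b_m} with m ≥ 1 and a₁,…,a_m,b₁,…,b_m ≥ 1. Let S be any set containing exactly one standard word from each non-singleton rotation orbit (the singleton orbits are exactly those of the powers x_i^a, i ∈ {1,2}, a ≥ 0, and every non-singleton orbit contains a standard word). Let (T̃_i)_{i≥1} and (Ũ_i)_{i≥1} be any families of polynomials in ℂ[X] with deg T̃_i = deg Ũ_i = i for every i ≥ 1. For a standard word x = x₁^{a₁}x₂^{b₁}⋯x₁^{a_m}x₂^{b_m} set Ũ^x = Ũ_{a₁}(x₁)Ũ_{b₁}(x₂)⋯Ũ_{a_m}(x₁)Ũ_{b_m}(x₂) ∈ ℂ⟨x₁,x₂⟩. Then the family Ξ = {1} ∪ {T̃_a(x_i) : a ≥ 1, i ∈ {1,2}} ∪ {Ũ^x : x ∈ S} is linearly independent, and its linear span 𝓙 satisfies 𝓘 + 𝓙 = ℂ⟨x₁,x₂⟩ and 𝓘 ∩ 𝓙 = {0}. -/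
noncomputable section

abbrev FreeCAlg : Type := MonoidAlgebra ℂ (FreeMonoid (Fin 2))

instance : DecidableEq (FreeMonoid (Fin 2)) := FreeMonoid.toList.decidableEq

/-- Rotation of a word, iterated `n` times. -/
def rotWord (n : ℕ) (w : FreeMonoid (Fin 2)) : FreeMonoid (Fin 2) :=
  FreeMonoid.ofList ((FreeMonoid.toList w).rotate n)

/-- Two words lie in the same rotation orbit. -/
def SameOrbit (w w' : FreeMonoid (Fin 2)) : Prop := ∃ n : ℕ, rotWord n w = w'

/-- The commutator subspace 𝓘. -/
def commutatorSubspace : Submodule ℂ FreeCAlg :=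
  Submodule.span ℂ {y : FreeCAlg | ∃ P Q : FreeCAlg, y = P * Q - Q * P}

/-- The generators x₁ (i = 0) and x₂ (i = 1) of ℂ⟨x₁,x₂⟩. -/
def Xgen (i : Fin 2) : FreeCAlg :=
  MonoidAlgebra.of ℂ (FreeMonoid (Fin 2)) (FreeMonoid.of i)

/-- A list [(a₁,b₁),…,(a_m,b_m)] of exponents is standard if it is nonempty and all
exponents are ≥ 1. -/
def IsStandardList (L : List (ℕ × ℕ)) : Prop :=
  L ≠ [] ∧ ∀ p ∈ L, 1 ≤ p.1 ∧ 1 ≤ p.2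

/-- The word x₁^{a₁}x₂^{b₁}⋯x₁^{a_m}x₂^{b_m} encoded by a list of exponents. -/
def wordOf (L : List (ℕ × ℕ)) : FreeMonoid (Fin 2) :=
  (L.map (fun p => FreeMonoid.of (0 : Fin 2) ^ p.1 * FreeMonoid.of (1 : Fin 2) ^ p.2)).prod

/-- A word is standard if it is of the form x₁^{a₁}x₂^{b₁}⋯x₁^{a_m}x₂^{b_m} with m ≥ 1 and
all exponents ≥ 1. -/
def IsStandardWord (w : FreeMonoid (Fin 2)) : Prop :=
  ∃ L : List (ℕ × ℕ), IsStandardList L ∧ wordOf L = w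

/-- Ũ^x = Ũ_{a₁}(x₁)Ũ_{b₁}(x₂)⋯Ũ_{a_m}(x₁)Ũ_{b_m}(x₂) for the standard word encoded by `L`. -/
def Uhat (U : ℕ → Polynomial ℂ) (L : List (ℕ × ℕ)) : FreeCAlg :=
  (L.map (fun p => Polynomial.aeval (Xgen 0) (U p.1) * Polynomial.aeval (Xgen 1) (U p.2))).prod

/-
Send every word to the representative of its rotation orbit: the chosen element of `S` for a
non-singleton orbit, the word itself for the singleton orbits of the powers `xᵢᵃ`. The induced
linear map `Φ` kills `PQ - QP` because `uv` and `vu` are rotations of each other, and `x - Φ x`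
lies in `𝓘` because a word and its rotation differ by a commutator; hence `ker Φ = 𝓘`.
Ordering words by length, each member of `Ξ` has a representative as its leading word (with a
nonzero coefficient), distinct members having distinct leading words. Since `Φ` preserves length
and fixes representatives, `Φ(Ξ)` is triangular with respect to the basis of representative
words of `range Φ`, hence a basis of it; a family mapped by `Φ` onto a basis of `range Φ` is
linearly independent and spans a complement of `ker Φ`.
-/

open MonoidAlgebra (single supported supported_mono mapDomainLinearMap)
open scoped Pointwise

namespace FreeMonoid

variable {α : Type*}

theorem toList_of_pow (i : α) (a : ℕ) : (of i ^ a).toList = List.replicate a i := by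
  induction a with
  | zero => rfl
  | succ a ih => rw [pow_succ, toList_mul, ih, List.replicate_succ']; rfl

theorem length_of_pow (i : α) (a : ℕ) : (of i ^ a).length = a := by
  simp [length, toList_of_pow]

end FreeMonoid

open FreeMonoid

theorem List.eq_of_replicate_append_eq {α : Type*} {x : α} {a a' : ℕ} {l l' : List α}
    (hl : l.head? ≠ some x) (hl' : l'.head? ≠ some x)
    (h : replicate a x ++ l = replicate a' x ++ l') : a = a' ∧ l = l' := by
  induction a generalizing a' with
  | zero => cases a' <;> simp_all [replicate_succ]
  | succ a ih =>
    cases a' with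
    | zero => subst h; simp [replicate_succ] at hl'
    | succ a' => simp_all [replicate_succ]

theorem LinearMap.linearIndependent_and_isCompl_ker {R M M' ι : Type*} [Ring R] [AddCommGroup M]
    [Module R M] [AddCommGroup M'] [Module R M'] (f : M →ₗ[R] M') {v : ι → M}
    (hli : LinearIndependent R (f ∘ v))
    (hspan : LinearMap.range f ≤ Submodule.span R (Set.range (f ∘ v))) :
    LinearIndependent R v ∧ IsCompl (LinearMap.ker f) (Submodule.span R (Set.range v)) := by
  refine ⟨hli.of_comp f, (Submodule.range_ker_disjoint hli).symm, ?_⟩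
  rw [codisjoint_iff, sup_comm, ← Submodule.comap_map_eq, Submodule.map_span, ← Set.range_comp]
  exact eq_top_iff.2 fun x _ => hspan (LinearMap.mem_range_self f x)

theorem Polynomial.leadingCoeff_ne_zero_of_natDegree_eq {R : Type*} [Semiring R]
    {p : Polynomial R} {n : ℕ} (hp : p.natDegree = n) (hn : 1 ≤ n) : p.leadingCoeff ≠ 0 :=
  leadingCoeff_ne_zero.2 (ne_zero_of_natDegree_gt (n := 0) (by omega))

section Supported

variable {k M N : Type*} [Semiring k]

theorem MonoidAlgebra.single_mem_supported {s : Set M} {m : M} (c : k)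
    (hm : m ∈ s) : single m c ∈ supported k k s :=
  Finsupp.single_mem_supported k c hm

theorem MonoidAlgebra.mul_mem_supported_mul [Mul M] {s t : Set M}
    {x y : MonoidAlgebra k M} (hx : x ∈ supported k k s) (hy : y ∈ supported k k t) :
    x * y ∈ supported k k (s * t) := by
  classical
  rw [MonoidAlgebra.mem_supported] at *
  refine (Finset.coe_subset.2 (MonoidAlgebra.support_coeff_mul_subset x y)).trans ?_
  rw [Finset.coe_mul]
  exact Set.mul_subset_mul hx hy

theorem MonoidAlgebra.mapDomainLinearMap_mem_supported (f : M → N) {s : Set M}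
    {x : MonoidAlgebra k M} (hx : x ∈ supported k k s) :
    mapDomainLinearMap k k f x ∈ supported k k (f '' s) := by
  classical
  rw [MonoidAlgebra.mem_supported, MonoidAlgebra.coeff_mapDomainLinearMap]
  refine (Finset.coe_subset.2 (Finsupp.mapDomain_support (f := f) (s := x.coeff))).trans ?_
  rw [Finset.coe_image]
  exact Set.image_mono hx

theorem MonoidAlgebra.range_mapDomainLinearMap_le_supported (f : M → N) :
    LinearMap.range (mapDomainLinearMap k k f) ≤ supported k k (Set.range f) := by
  rintro _ ⟨x, rfl⟩
  have hx : x ∈ supported k k Set.univ := MonoidAlgebra.mem_supported.2 (Set.subset_univ _)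
  simpa using mapDomainLinearMap_mem_supported f hx

end Supported

section LeadingTerm

variable {k α : Type*} [CommRing k]

def HasLeadingTerm (x : MonoidAlgebra k (FreeMonoid α)) (w : FreeMonoid α) (c : k) : Prop :=
  x - single w c ∈ supported k k {v | v.length < w.length}

theorem hasLeadingTerm_single (w : FreeMonoid α) (c : k) : HasLeadingTerm (single w c) w c := by
  simp [HasLeadingTerm]

theorem HasLeadingTerm.mem_supported_length_le {x : MonoidAlgebra k (FreeMonoid α)}
    {w : FreeMonoid α} {c : k} (h : HasLeadingTerm x w c) :
    x ∈ supported k k {v | v.length ≤ w.length} := by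
  have hsub : {v : FreeMonoid α | v.length < w.length} ⊆ {v | v.length ≤ w.length} :=
    Set.ofPred_subset_ofPred.2 fun _ => le_of_lt
  rw [← sub_add_cancel x (single w c)]
  exact add_mem (supported_mono hsub h)
    (MonoidAlgebra.single_mem_supported c (Set.mem_ofPred.2 le_rfl))

theorem HasLeadingTerm.coeff_of_length_le {x : MonoidAlgebra k (FreeMonoid α)}
    {w u : FreeMonoid α} {c : k} (h : HasLeadingTerm x w c) (hu : w.length ≤ u.length) :
    x.coeff u = Finsupp.single w c u := by
  have := MonoidAlgebra.mem_supported'.1 h u (not_lt.2 hu)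
  rwa [MonoidAlgebra.coeff_sub, Finsupp.sub_apply, sub_eq_zero] at this

theorem HasLeadingTerm.mul {x y : MonoidAlgebra k (FreeMonoid α)} {u v : FreeMonoid α} {c d : k}
    (hx : HasLeadingTerm x u c) (hy : HasLeadingTerm y v d) :
    HasLeadingTerm (x * y) (u * v) (c * d) := by
  have hsplit : x * y - single (u * v) (c * d) =
      single u c * (y - single v d) + (x - single u c) * y := by
    rw [← MonoidAlgebra.single_mul_single]; noncomm_ring
  have hle_lt : {w : FreeMonoid α | w.length ≤ u.length} * {w | w.length < v.length} ⊆
      {w | w.length < (u * v).length} := by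
    simp only [Set.mul_subset_iff, Set.mem_ofPred_eq, length_mul]; intros; omega
  have hlt_le : {w : FreeMonoid α | w.length < u.length} * {w | w.length ≤ v.length} ⊆
      {w | w.length < (u * v).length} := by
    simp only [Set.mul_subset_iff, Set.mem_ofPred_eq, length_mul]; intros; omega
  rw [HasLeadingTerm, hsplit]
  exact add_mem
    (supported_mono hle_lt (MonoidAlgebra.mul_mem_supported_mul
      (MonoidAlgebra.single_mem_supported c (Set.mem_ofPred.2 le_rfl)) hy))
    (supported_mono hlt_le (MonoidAlgebra.mul_mem_supported_mul hx hy.mem_supported_length_le))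

theorem HasLeadingTerm.list_prod {ι : Type*} {f : ι → MonoidAlgebra k (FreeMonoid α)}
    {w : ι → FreeMonoid α} {c : ι → k} (l : List ι)
    (h : ∀ i ∈ l, HasLeadingTerm (f i) (w i) (c i)) :
    HasLeadingTerm (l.map f).prod (l.map w).prod (l.map c).prod := by
  induction l with
  | nil => simpa [MonoidAlgebra.one_def] using hasLeadingTerm_single (1 : FreeMonoid α) (1 : k)
  | cons i l ih =>
    simpa using (h i List.mem_cons_self).mul (ih fun j hj => h j (List.mem_cons_of_mem i hj))

theorem hasLeadingTerm_aeval_of (i : α) (p : Polynomial k) :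
    HasLeadingTerm (Polynomial.aeval (MonoidAlgebra.of k _ (of i)) p) (of i ^ p.natDegree)
      p.leadingCoeff := by
  have hpow (j : ℕ) : MonoidAlgebra.of k _ (of i) ^ j = single (of i ^ j) 1 := by
    simp [MonoidAlgebra.single_pow]
  rw [HasLeadingTerm, Polynomial.aeval_eq_sum_range, Finset.sum_range_succ, hpow,
    MonoidAlgebra.smul_single', mul_one, Polynomial.leadingCoeff, add_sub_cancel_right]
  refine Submodule.sum_mem _ fun j hj => Submodule.smul_mem _ _ ?_
  rw [hpow]
  exact MonoidAlgebra.single_mem_supported 1 (by simpa [length_of_pow] using hj)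

theorem HasLeadingTerm.mapDomain {x : MonoidAlgebra k (FreeMonoid α)} {w : FreeMonoid α} {c : k}
    {r : FreeMonoid α → FreeMonoid α} (h : HasLeadingTerm x w c)
    (hr : ∀ u, (r u).length = u.length) (hw : r w = w) :
    HasLeadingTerm (mapDomainLinearMap k k r x) w c := by
  have himage : r '' {u | u.length < w.length} ⊆ {u | u.length < w.length} := by
    rintro _ ⟨u, hu, rfl⟩
    exact Set.mem_ofPred.2 ((hr u).trans_lt hu)
  have := supported_mono himage (MonoidAlgebra.mapDomainLinearMap_mem_supported r h)
  rwa [map_sub, MonoidAlgebra.mapDomainLinearMap_single, hw] at this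

end LeadingTerm

section Triangular

variable {k α ι : Type*} [Field k] {v : ι → MonoidAlgebra k (FreeMonoid α)}
  {wt : ι → FreeMonoid α} {c : ι → k}

theorem linearIndependent_of_hasLeadingTerm (hwt : Function.Injective wt) (hc : ∀ i, c i ≠ 0)
    (hv : ∀ i, HasLeadingTerm (v i) (wt i) (c i)) : LinearIndependent k v := by
  classical
  rw [linearIndependent_iff']
  intro s g hsum i hi
  by_contra hgi
  obtain ⟨i₀, hi₀, hmax⟩ := (s.filter (g · ≠ 0)).exists_max_image 
      (fun j ↦ (wt j).length)
    ⟨i, Finset.mem_filter.2 ⟨hi, hgi⟩⟩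
  rw [Finset.mem_filter] at hi₀
  have hcoeff : (∑ j ∈ s, g j • v j).coeff (wt i₀) = g i₀ * c i₀ := by
    rw [MonoidAlgebra.coeff_sum, Finsupp.finsetSum_apply, Finset.sum_eq_single_of_mem i₀ hi₀.1]
    · simp [(hv i₀).coeff_of_length_le le_rfl]
    · intro j hj hji
      by_cases hgj : g j = 0
      · simp [hgj]
      · simp [(hv j).coeff_of_length_le (hmax j (Finset.mem_filter.2 ⟨hj, hgj⟩)),
          hwt.ne hji]
  rw [hsum] at hcoeff
  exact mul_ne_zero hi₀.2 (hc i₀) hcoeff.symm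

theorem supported_range_le_span_of_hasLeadingTerm (hc : ∀ i, c i ≠ 0)
    (hv : ∀ i, HasLeadingTerm (v i) (wt i) (c i))
    (hv_range : ∀ i, v i ∈ supported k k (Set.range wt)) :
    supported k k (Set.range wt) ≤ Submodule.span k (Set.range v) := by
  rw [MonoidAlgebra.supported_eq_span_single, Submodule.span_le]
  rintro _ ⟨_, ⟨i, rfl⟩, rfl⟩
  induction h : (wt i).length using Nat.strong_induction_on generalizing i with
  | _ n ih =>
  have hlower : v i - single (wt i) (c i) ∈ Submodule.span k (Set.range v) := by
    have hmem : v i - single (wt i) (c i) ∈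
        supported k k (Set.range wt ∩ {u | u.length < (wt i).length}) :=
      MonoidAlgebra.mem_supported.2 (Set.subset_inter
        (sub_mem (hv_range i) (MonoidAlgebra.single_mem_supported _ ⟨i, rfl⟩)) (hv i))
    rw [MonoidAlgebra.supported_eq_span_single] at hmem
    refine Submodule.span_le.2 ?_ hmem
    rintro _ ⟨_, ⟨⟨j, rfl⟩, hj⟩, rfl⟩
    exact ih _ (h ▸ hj) j rfl
  have hsingle : single (wt i) (1 : k) = (c i)⁻¹ • (v i - (v i - single (wt i) (c i))) := by
    rw [sub_sub_cancel, MonoidAlgebra.smul_single', inv_mul_cancel₀ (hc i)]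
  change single (wt i) (1 : k) ∈ _
  rw [hsingle]
  exact Submodule.smul_mem _ _ (sub_mem (Submodule.subset_span ⟨i, rfl⟩) hlower)

end Triangular

theorem sameOrbit_iff_isRotated {w w' : FreeMonoid (Fin 2)} :
    SameOrbit w w' ↔ w.toList ~r w'.toList :=
  exists_congr fun _ => ofList.symm_apply_eq.symm

theorem SameOrbit.refl (w : FreeMonoid (Fin 2)) : SameOrbit w w :=
  sameOrbit_iff_isRotated.2 (.refl _)

theorem SameOrbit.symm {w w' : FreeMonoid (Fin 2)} (h : SameOrbit w w') : SameOrbit w' w :=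
  sameOrbit_iff_isRotated.2 (sameOrbit_iff_isRotated.1 h).symm

theorem SameOrbit.trans {w w' w'' : FreeMonoid (Fin 2)} (h : SameOrbit w w')
    (h' : SameOrbit w' w'') : SameOrbit w w'' :=
  sameOrbit_iff_isRotated.2 ((sameOrbit_iff_isRotated.1 h).trans (sameOrbit_iff_isRotated.1 h'))

theorem sameOrbit_mul_comm (u v : FreeMonoid (Fin 2)) : SameOrbit (u * v) (v * u) :=
  sameOrbit_iff_isRotated.2 List.isRotated_append

theorem SameOrbit.exists_eq_mul {w w' : FreeMonoid (Fin 2)} (h : SameOrbit w w') :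
    ∃ u v, w = u * v ∧ w' = v * u := by
  obtain ⟨n, rfl⟩ := h
  refine ⟨ofList (w.toList.take (n % w.length)), ofList (w.toList.drop (n % w.length)), ?_, ?_⟩
    <;> apply toList.injective
  · simp
  · simp [rotWord, List.rotate_eq_drop_append_take_mod, length]

theorem forall_rotWord_eq_self_iff {w : FreeMonoid (Fin 2)} :
    (∀ n, rotWord n w = w) ↔ ∃ i a, w = of i ^ a := by
  have : (∀ n, rotWord n w = w) ↔ ∀ n, w.toList.rotate n = w.toList :=
    forall_congr' fun n => ofList.symm_apply_eq
  rw [this, List.rotate_eq_self_iff_eq_replicate]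
  constructor
  · rintro ⟨i, hi⟩
    exact ⟨i, w.length, toList.injective (by rw [toList_of_pow]; exact hi)⟩
  · rintro ⟨i, a, rfl⟩
    exact ⟨i, by simp [toList_of_pow]⟩

theorem SameOrbit.eq_of_forall_rotWord_eq {w w' : FreeMonoid (Fin 2)} (h : SameOrbit w w')
    (hw : ∀ n, rotWord n w = w) : w' = w := by
  obtain ⟨n, rfl⟩ := h
  exact hw n

theorem single_sub_single_mem_commutatorSubspace {w w' : FreeMonoid (Fin 2)}
    (h : SameOrbit w w') (c : ℂ) : single w c - single w' c ∈ commutatorSubspace := by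
  obtain ⟨u, v, rfl, rfl⟩ := h.exists_eq_mul
  refine Submodule.subset_span ⟨single u c, single v 1, ?_⟩
  simp only [MonoidAlgebra.single_mul_single, mul_one, one_mul]

theorem ker_mapDomain_eq_commutatorSubspace (r : FreeMonoid (Fin 2) → FreeMonoid (Fin 2))
    (hr_orbit : ∀ w, SameOrbit w (r w)) (hr_comm : ∀ u v, r (u * v) = r (v * u)) :
    LinearMap.ker (mapDomainLinearMap ℂ ℂ r) = commutatorSubspace := by
  set Φ := mapDomainLinearMap ℂ ℂ r
  apply le_antisymm
  · have hsub : ∀ x, x - Φ x ∈ commutatorSubspace := by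
      intro x
      induction x using MonoidAlgebra.induction_linear with
      | zero => simp
      | add x y hx hy => simpa [add_sub_add_comm] using add_mem hx hy
      | single w c =>
        simpa [Φ] using single_sub_single_mem_commutatorSubspace (hr_orbit w) c
    intro x hx
    simpa [LinearMap.mem_ker.1 hx] using hsub x
  · have hbil :
        (LinearMap.mul ℂ FreeCAlg).compr₂ Φ =
          (LinearMap.mul ℂ FreeCAlg).flip.compr₂ Φ := by
      ext u v
      simp [Φ, hr_comm]
    refine Submodule.span_le.2 ?_
    rintro _ ⟨P, Q, rfl⟩
    simpa [sub_eq_zero] using LinearMap.congr_fun₂ hbil P Q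

section OrbitRep

variable {T : Set (FreeMonoid (Fin 2))} (hT : ∀ w, ∃! t, t ∈ T ∧ SameOrbit w t)

def orbitRep (w : FreeMonoid (Fin 2)) : FreeMonoid (Fin 2) := (hT w).exists.choose

theorem orbitRep_mem (w : FreeMonoid (Fin 2)) : orbitRep hT w ∈ T :=
  (hT w).exists.choose_spec.1

theorem sameOrbit_orbitRep (w : FreeMonoid (Fin 2)) : SameOrbit w (orbitRep hT w) :=
  (hT w).exists.choose_spec.2

theorem orbitRep_eq_self {t : FreeMonoid (Fin 2)} (ht : t ∈ T) : orbitRep hT t = t :=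
  (hT t).unique ⟨orbitRep_mem hT t, sameOrbit_orbitRep hT t⟩ ⟨ht, .refl t⟩

theorem orbitRep_eq_of_sameOrbit {w w' : FreeMonoid (Fin 2)} (h : SameOrbit w w') :
    orbitRep hT w = orbitRep hT w' :=
  (hT w).unique ⟨orbitRep_mem hT w, sameOrbit_orbitRep hT w⟩
    ⟨orbitRep_mem hT w', h.trans (sameOrbit_orbitRep hT w')⟩

theorem orbitRep_mul_comm (u v : FreeMonoid (Fin 2)) : orbitRep hT (u * v) = orbitRep hT (v * u) :=
  orbitRep_eq_of_sameOrbit hT (sameOrbit_mul_comm u v)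

theorem length_orbitRep (w : FreeMonoid (Fin 2)) : (orbitRep hT w).length = w.length := by
  obtain ⟨n, hn⟩ := sameOrbit_orbitRep hT w
  rw [← hn]
  simp [rotWord, length]

end OrbitRep

theorem toList_wordOf_cons (a b : ℕ) (t : List (ℕ × ℕ)) :
    (wordOf ((a, b) :: t)).toList =
      List.replicate a 0 ++ (List.replicate b 1 ++ (wordOf t).toList) := by
  simp [wordOf, toList_of_pow]

theorem head?_toList_wordOf_cons {p : ℕ × ℕ} (t : List (ℕ × ℕ)) (hp : 1 ≤ p.1) :
    (wordOf (p :: t)).toList.head? = some 0 := by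
  obtain ⟨_ | a, b⟩ := p
  · contradiction
  · simp [toList_wordOf_cons, List.replicate_succ]

theorem head?_toList_wordOf_ne_one {t : List (ℕ × ℕ)}
    (ht : ∀ p ∈ t, 1 ≤ p.1 ∧ 1 ≤ p.2) :
    (wordOf t).toList.head? ≠ some 1 := by
  cases t with
  | nil => simp [wordOf]
  | cons p t => simp [head?_toList_wordOf_cons t (ht p List.mem_cons_self).1]

theorem head?_replicate_one_append_ne_zero {b : ℕ} (hb : 1 ≤ b) (l : List (Fin 2)) :
    (List.replicate b 1 ++ l).head? ≠ some 0 := by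
  obtain ⟨b, rfl⟩ := Nat.exists_eq_add_of_le' hb
  simp [List.replicate_succ]

theorem wordOf_injOn : Set.InjOn wordOf {L | ∀ p ∈ L, 1 ≤ p.1 ∧ 1 ≤ p.2} := by
  intro L hL L' hL' h
  induction L generalizing L' with
  | nil =>
    cases L' with
    | nil => rfl
    | cons p' t' =>
      have := head?_toList_wordOf_cons t' (hL' p' List.mem_cons_self).1
      rw [← h] at this
      simp [wordOf] at this
  | cons p t ih =>
    cases L' with
    | nil =>
      have := head?_toList_wordOf_cons t (hL p List.mem_cons_self).1
      rw [h] at this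
      simp [wordOf] at this
    | cons p' t' =>
      obtain ⟨a, b⟩ := p
      obtain ⟨a', b'⟩ := p'
      have hpos := hL _ List.mem_cons_self
      have hpos' := hL' _ List.mem_cons_self
      have htail : ∀ q ∈ t, 1 ≤ q.1 ∧ 1 ≤ q.2 := fun q hq ↦ hL q (.tail _ hq)
      have htail' : ∀ q ∈ t', 1 ≤ q.1 ∧ 1 ≤ q.2 := fun q hq ↦ hL' q (.tail _ hq)
      have hlist := congrArg toList h
      rw [toList_wordOf_cons, toList_wordOf_cons] at hlist
      obtain ⟨rfl, hrest⟩ := List.eq_of_replicate_append_eq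
        (head?_replicate_one_append_ne_zero hpos.2 _)
        (head?_replicate_one_append_ne_zero hpos'.2 _) hlist
      obtain ⟨rfl, htl⟩ := List.eq_of_replicate_append_eq
        (head?_toList_wordOf_ne_one htail) (head?_toList_wordOf_ne_one htail') hrest
      rw [ih htail htail' (toList.injective htl)]

theorem IsStandardList.not_forall_rotWord_eq {L : List (ℕ × ℕ)} (hL : IsStandardList L) :
    ¬ ∀ n, rotWord n (wordOf L) = wordOf L := by
  obtain ⟨⟨a, b⟩, t, rfl⟩ := List.exists_cons_of_ne_nil hL.1
  obtain ⟨ha, hb⟩ := hL.2 _ List.mem_cons_self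
  rw [forall_rotWord_eq_self_iff]
  rintro ⟨i, e, he⟩
  have hmem (j : Fin 2) (hj : j ∈ (wordOf ((a, b) :: t)).toList) : j = i := by
    rw [he, toList_of_pow] at hj
    exact List.eq_of_mem_replicate hj
  have h0 := hmem 0 (by simp [toList_wordOf_cons]; omega)
  have h1 := hmem 1 (by simp [toList_wordOf_cons]; omega)
  exact zero_ne_one (h0.trans h1.symm)

section Xi

variable (S : Set (FreeMonoid (Fin 2)))

def repWords : Set (FreeMonoid (Fin 2)) := S ∪ {w | ∀ n, rotWord n w = w}

abbrev XiIndex : Type :=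
  Unit ⊕ ({a : ℕ // 1 ≤ a} × Fin 2) ⊕
    {L : List (ℕ × ℕ) // IsStandardList L ∧ wordOf L ∈ S}

def xi (T U : ℕ → Polynomial ℂ) : XiIndex S → FreeCAlg :=
  Sum.elim (fun _ => 1)
    (Sum.elim (fun p => Polynomial.aeval (Xgen p.2) (T p.1)) (fun L => Uhat U L.1))

def xiLeadingWord : XiIndex S → FreeMonoid (Fin 2) :=
  Sum.elim (fun _ => 1) (Sum.elim (fun p => of p.2 ^ p.1.1) (fun L => wordOf L.1))

theorem xiLeadingWord_injective : Function.Injective (xiLeadingWord S) := by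
  have hpow_inj : Function.Injective fun p : {a : ℕ // 1 ≤ a} × Fin 2 => of p.2 ^ p.1.1 := by
    rintro ⟨⟨a, ha⟩, i⟩ ⟨⟨a', ha'⟩, i'⟩ h
    obtain ⟨rfl, hi⟩ := List.replicate_inj.1 (by simpa [toList_of_pow] using congrArg toList h)
    obtain rfl : i = i' := hi.resolve_left (by omega)
    rfl
  have hword_inj : Function.Injective fun L : {L // IsStandardList L ∧ wordOf L ∈ S} =>
      wordOf L.1 :=
    fun L L' h => Subtype.ext (wordOf_injOn L.2.1.2 L'.2.1.2 h)
  refine Function.Injective.sumElim (fun _ _ _ => rfl)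
    (hpow_inj.sumElim hword_inj fun p L h => L.2.1.not_forall_rotWord_eq ?_) ?_
  · exact forall_rotWord_eq_self_iff.2 ⟨p.2, p.1, h.symm⟩
  · rintro - (⟨⟨a, ha⟩, i⟩ | L) h
    · have := congrArg length h
      simp [length_of_pow] at this
      omega
    · exact L.2.1.not_forall_rotWord_eq (forall_rotWord_eq_self_iff.2 ⟨0, 0, h.symm⟩)

theorem range_xiLeadingWord (hS_std : ∀ w ∈ S, IsStandardWord w) :
    Set.range (xiLeadingWord S) = repWords S := by
  apply subset_antisymm
  · rintro _ ⟨_ | ⟨⟨a, ha⟩, i⟩ | ⟨L, hL, hLS⟩, rfl⟩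
    · exact Or.inr (forall_rotWord_eq_self_iff.2 ⟨0, 0, rfl⟩)
    · exact Or.inr (forall_rotWord_eq_self_iff.2 ⟨i, a, rfl⟩)
    · exact Or.inl hLS
  · rintro w (hw | hw)
    · obtain ⟨L, hL, rfl⟩ := hS_std w hw
      exact ⟨.inr (.inr ⟨L, hL, hw⟩), rfl⟩
    · obtain ⟨i, _ | a, rfl⟩ := forall_rotWord_eq_self_iff.1 hw
      · exact ⟨.inl (), rfl⟩
      · exact ⟨.inr (.inl (⟨a + 1, by omega⟩, i)), rfl⟩

theorem existsUnique_mem_repWords_sameOrbit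
    (hS_rep : ∀ w : FreeMonoid (Fin 2), (∃ n, rotWord n w ≠ w) →
      ∃! w', w' ∈ S ∧ SameOrbit w w')
    (w : FreeMonoid (Fin 2)) :
    ∃! t, t ∈ repWords S ∧ SameOrbit w t := by
  by_cases hw : ∀ n, rotWord n w = w
  · refine ⟨w, ⟨Or.inr hw, .refl w⟩, ?_⟩
    rintro t ⟨-, hwt⟩
    exact hwt.eq_of_forall_rotWord_eq hw
  · obtain ⟨t, ⟨htS, hwt⟩, huniq⟩ := hS_rep w (not_forall.1 hw)
    refine ⟨t, ⟨Or.inl htS, hwt⟩, ?_⟩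
    rintro t' ⟨ht'S | ht'_fixed, hwt'⟩
    · exact huniq t' ⟨ht'S, hwt'⟩
    · obtain rfl := hwt'.symm.eq_of_forall_rotWord_eq ht'_fixed
      exact absurd ht'_fixed hw

theorem hasLeadingTerm_aeval_Xgen (i : Fin 2) {p : Polynomial ℂ} {n : ℕ}
    (hp : p.natDegree = n) :
    HasLeadingTerm (Polynomial.aeval (Xgen i) p) (of i ^ n) p.leadingCoeff :=
  hp ▸ hasLeadingTerm_aeval_of i p

theorem exists_hasLeadingTerm_xi {T U : ℕ → Polynomial ℂ}
    (hT : ∀ i : ℕ, 1 ≤ i → (T i).natDegree = i)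
    (hU : ∀ i : ℕ, 1 ≤ i → (U i).natDegree = i) (z : XiIndex S) :
    ∃ c ≠ 0, HasLeadingTerm (xi S T U z) (xiLeadingWord S z) c := by
  rcases z with _ | ⟨⟨a, ha⟩, i⟩ | ⟨L, hL, -⟩
  · refine ⟨1, one_ne_zero, ?_⟩
    simpa [xi, xiLeadingWord, MonoidAlgebra.one_def] using
      hasLeadingTerm_single (1 : FreeMonoid (Fin 2)) 1
  · exact ⟨_, Polynomial.leadingCoeff_ne_zero_of_natDegree_eq (hT a ha) ha,
      hasLeadingTerm_aeval_Xgen i (hT a ha)⟩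
  · refine ⟨(L.map fun p => (U p.1).leadingCoeff * (U p.2).leadingCoeff).prod,
      List.prod_ne_zero ?_, HasLeadingTerm.list_prod L fun p hp => ?_⟩
    · simp only [List.mem_map, not_exists, not_and]
      intro p hp
      obtain ⟨h1, h2⟩ := hL.2 p hp
      exact (mul_ne_zero (Polynomial.leadingCoeff_ne_zero_of_natDegree_eq (hU _ h1) h1)
        (Polynomial.leadingCoeff_ne_zero_of_natDegree_eq (hU _ h2) h2))
    · obtain ⟨h1, h2⟩ := hL.2 p hp
      exact (hasLeadingTerm_aeval_Xgen 0 (hU _ h1)).mul (hasLeadingTerm_aeval_Xgen 1 (hU _ h2))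

end Xi

theorem xi_linearIndependent_and_complement
    (S : Set (FreeMonoid (Fin 2)))
    (hS_std : ∀ w ∈ S, IsStandardWord w)
    (hS_rep : ∀ w : FreeMonoid (Fin 2), (∃ n, rotWord n w ≠ w) →
        ∃! w', w' ∈ S ∧ SameOrbit w w')
    (T U : ℕ → Polynomial ℂ)
    (hT : ∀ i : ℕ, 1 ≤ i → (T i).natDegree = i)
    (hU : ∀ i : ℕ, 1 ≤ i → (U i).natDegree = i) :
    -- the family Ξ, indexed by {1} ⊕ {pairs (a,i), a ≥ 1, i ∈ {1,2}} ⊕ {x ∈ S}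
    let Xi : Unit ⊕ ({a : ℕ // 1 ≤ a} × Fin 2) ⊕
        {L : List (ℕ × ℕ) // IsStandardList L ∧ wordOf L ∈ S} → FreeCAlg :=
      fun z => match z with
        | Sum.inl _ => 1
        | Sum.inr (Sum.inl (a, i)) => Polynomial.aeval (Xgen i) (T a.1)
        | Sum.inr (Sum.inr L) => Uhat U L.1
    LinearIndependent ℂ Xi ∧
    commutatorSubspace ⊔ Submodule.span ℂ (Set.range Xi) = (⊤ : Submodule ℂ FreeCAlg) ∧
    commutatorSubspace ⊓ Submodule.span ℂ (Set.range Xi) = (⊥ : Submodule ℂ FreeCAlg) := by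
  intro Xi
  have hXi : Xi = xi S T U := funext fun z => by rcases z with _ | _ | _ <;> rfl
  rw [hXi]
  have hR := existsUnique_mem_repWords_sameOrbit S hS_rep
  set Φ := mapDomainLinearMap ℂ ℂ (orbitRep hR)
  choose c hc hlead using exists_hasLeadingTerm_xi S hT hU
  have hΦlead (z : XiIndex S) : HasLeadingTerm (Φ (xi S T U z)) (xiLeadingWord S z) (c z) :=
    (hlead z).mapDomain (length_orbitRep hR)
      (orbitRep_eq_self hR (range_xiLeadingWord S hS_std ▸ ⟨z, rfl⟩))
  have hΦrange : LinearMap.range Φ ≤ supported ℂ ℂ (Set.range (xiLeadingWord S)) := by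
    refine (MonoidAlgebra.range_mapDomainLinearMap_le_supported _).trans
      (supported_mono ?_)
    rw [range_xiLeadingWord S hS_std]
    exact Set.range_subset_iff.2 (orbitRep_mem hR)
  obtain ⟨hli, hcompl⟩ := Φ.linearIndependent_and_isCompl_ker
    (linearIndependent_of_hasLeadingTerm (xiLeadingWord_injective S) hc hΦlead)
    (hΦrange.trans (supported_range_le_span_of_hasLeadingTerm hc hΦlead
      fun z => hΦrange (LinearMap.mem_range_self Φ _)))
  rw [ker_mapDomain_eq_commutatorSubspace _ (sameOrbit_orbitRep hR) (orbitRep_mul_comm hR)]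
    at hcompl
  exact ⟨hli, codisjoint_iff.1 hcompl.codisjoint, disjoint_iff.1 hcompl.disjoint⟩

end
end

section
/- Let y be a nonnegative real random variable on a probability space (Ω,μ) with finite second moment; write m₁ = E[y] and m₂ = E[y²], and assume m₁ > 0. Let δ be a real number with 0 ≤ δ < min(m₂/(2m₁), m₁). Define w = 1 − m₁²/m₂ if δ = 0, and w = (−m₂ + 2δm₁ + √(m₂² − 4δm₂(m₁−δ)))/(2δ²) if δ > 0. Then 0 ≤ w < 1 and Prob(y ≤ δ) ≤ w. -/
/-!
Split `E[y]` over `A = {y ≤ δ}` and its complement: the part on `A` is at most `δ P(A)`, and by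
Cauchy–Schwarz the part on `Aᶜ` is at most `√(m₂ (1 - P(A)))`. Squaring, `p = P(A)` satisfies
`δ² p² + (m₂ - 2δm₁) p + m₁² - m₂ ≤ 0`, so `p` lies below the larger root of this quadratic, which
is `w`. The root is `< 1` because the quadratic equals `(m₁ - δ)² > 0` at `1`, right of its vertex.
-/

open MeasureTheory

section Quadratic

variable {a b c x : ℝ}

lemma discrim_eq_sq_sub (a b c x : ℝ) :
    discrim a b c = (2 * a * x + b) ^ 2 - 4 * a * (a * (x * x) + b * x + c) := by
  rw [discrim]; ring

lemma le_quadratic_root (ha : 0 < a) (h : a * (x * x) + b * x + c ≤ 0) :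
    x ≤ (-b + √(discrim a b c)) / (2 * a) := by
  have hsq : (2 * a * x + b) ^ 2 ≤ discrim a b c := by
    rw [discrim_eq_sq_sub a b c x]; nlinarith
  have := (le_abs_self _).trans (Real.abs_le_sqrt hsq)
  rw [le_div_iff₀ (by positivity)]
  linarith

lemma quadratic_root_lt (ha : 0 < a) (h : 0 < a * (x * x) + b * x + c)
    (hx : 0 < 2 * a * x + b) : (-b + √(discrim a b c)) / (2 * a) < x := by
  have hsq : discrim a b c < (2 * a * x + b) ^ 2 := by
    rw [discrim_eq_sq_sub a b c x]; nlinarith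
  have := (Real.sqrt_lt' hx).2 hsq
  rw [div_lt_iff₀ (by positivity)]
  linarith

end Quadratic

section Integral

variable {Ω : Type*} [MeasurableSpace Ω]

lemma sq_integral_le_measureReal_univ_mul_integral_sq {ν : Measure Ω} [IsFiniteMeasure ν]
    {f : Ω → ℝ} (hf : Integrable f ν) (hf2 : Integrable (fun ω => f ω ^ 2) ν) :
    (∫ ω, f ω ∂ν) ^ 2 ≤ ν.real Set.univ * ∫ ω, f ω ^ 2 ∂ν := by
  have hnonneg : ∀ t : ℝ,
      0 ≤ ν.real Set.univ * (t * t) + (-2 * ∫ ω, f ω ∂ν) * t + ∫ ω, f ω ^ 2 ∂ν := by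
    intro t
    have hexpand : ∫ ω, (t - f ω) ^ 2 ∂ν
        = ν.real Set.univ * (t * t) + (-2 * ∫ ω, f ω ∂ν) * t + ∫ ω, f ω ^ 2 ∂ν := by
      have hpoint : (fun ω => (t - f ω) ^ 2) = fun ω => (t * t - 2 * t * f ω) + f ω ^ 2 := by
        funext ω; ring
      rw [hpoint, integral_add (by fun_prop) hf2, integral_sub (by fun_prop) (by fun_prop),
        integral_const, integral_const_mul,
        smul_eq_mul]
      ring
    exact hexpand ▸ integral_nonneg fun ω => sq_nonneg _
  have := discrim_le_zero hnonneg
  rw [discrim] at this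
  linarith

lemma sq_integral_sub_mul_measureReal_le {μ : Measure Ω} [IsProbabilityMeasure μ]
    {y : Ω → ℝ} (hy : Integrable y μ) (hy2 : Integrable (fun ω => y ω ^ 2) μ)
    {δ : ℝ} (hδ : 0 ≤ δ) (hδy : δ ≤ ∫ ω, y ω ∂μ) :
    (∫ ω, y ω ∂μ - δ * μ.real {ω | y ω ≤ δ}) ^ 2
      ≤ (∫ ω, y ω ^ 2 ∂μ) * (1 - μ.real {ω | y ω ≤ δ}) := by
  set A := {ω | y ω ≤ δ}
  have hA : NullMeasurableSet A μ :=
    nullMeasurableSet_le hy.aemeasurable aemeasurable_const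
  have hlow : ∫ ω in A, y ω ∂μ ≤ δ * μ.real A :=
    calc ∫ ω in A, y ω ∂μ ≤ ∫ _ in A, δ ∂μ :=
          setIntegral_mono_on₀ hy.integrableOn (integrableOn_const) hA fun _ hω => hω
      _ = δ * μ.real A := by rw [setIntegral_const, smul_eq_mul, mul_comm]
  have hhigh : (∫ ω in Aᶜ, y ω ∂μ) ^ 2 ≤ (∫ ω, y ω ^ 2 ∂μ) * (1 - μ.real A) :=
    calc (∫ ω in Aᶜ, y ω ∂μ) ^ 2 ≤ μ.real Aᶜ * ∫ ω in Aᶜ, y ω ^ 2 ∂μ := by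
          simpa only [measureReal_restrict_apply_univ] using
            sq_integral_le_measureReal_univ_mul_integral_sq hy.restrict hy2.restrict
      _ ≤ μ.real Aᶜ * ∫ ω, y ω ^ 2 ∂μ :=
          mul_le_mul_of_nonneg_left
            (setIntegral_le_integral hy2 (ae_of_all _ fun _ => sq_nonneg _)) measureReal_nonneg
      _ = (∫ ω, y ω ^ 2 ∂μ) * (1 - μ.real A) := by rw [probReal_compl_eq_one_sub₀ hA, mul_comm]
  have hsplit := integral_add_compl₀ hA hy
  have hmass : δ * μ.real A ≤ δ := mul_le_of_le_one_right hδ measureReal_le_one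
  calc (∫ ω, y ω ∂μ - δ * μ.real A) ^ 2 ≤ (∫ ω in Aᶜ, y ω ∂μ) ^ 2 :=
        pow_le_pow_left₀ (by linarith) (by linarith) 2
    _ ≤ _ := hhigh

end Integral

theorem prob_le_delta_bound_general
    {Ω : Type*} [MeasurableSpace Ω] (μ : Measure Ω) [IsProbabilityMeasure μ]
    (y : Ω → ℝ)
    (hy_int : Integrable y μ)
    (hy_sq_int : Integrable (fun ω => (y ω) ^ 2) μ)
    (m₁ m₂ : ℝ)
    (hm₁ : m₁ = ∫ ω, y ω ∂μ)
    (hm₂ : m₂ = ∫ ω, (y ω) ^ 2 ∂μ)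
    (hm₁_pos : 0 < m₁)
    (δ : ℝ) (hδ_nonneg : 0 ≤ δ) (hδ_lt : δ < min (m₂ / (2 * m₁)) m₁)
    (w : ℝ)
    (hw : w = if δ = 0 then 1 - m₁ ^ 2 / m₂
        else (-m₂ + 2 * δ * m₁ + Real.sqrt (m₂ ^ 2 - 4 * δ * m₂ * (m₁ - δ))) / (2 * δ ^ 2)) :
    0 ≤ w ∧ w < 1 ∧ μ {ω | y ω ≤ δ} ≤ ENNReal.ofReal w := by
  have hδm₁ : δ < m₁ := hδ_lt.trans_le (min_le_right _ _)
  have h2δm₁ : 2 * δ * m₁ < m₂ := by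
    have := hδ_lt.trans_le (min_le_left _ _)
    rw [lt_div_iff₀ (by positivity)] at this
    linarith
  set p := μ.real {ω | y ω ≤ δ}
  have hquad : δ ^ 2 * (p * p) + (m₂ - 2 * δ * m₁) * p + (m₁ ^ 2 - m₂) ≤ 0 := by
    have := sq_integral_sub_mul_measureReal_le hy_int hy_sq_int hδ_nonneg (hm₁ ▸ hδm₁.le)
    rw [← hm₁, ← hm₂] at this
    linear_combination this
  suffices p ≤ w ∧ w < 1 from
    ⟨measureReal_nonneg.trans this.1, this.2,
      ofReal_measureReal (measure_ne_top μ _) ▸ ENNReal.ofReal_le_ofReal this.1⟩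
  rcases hδ_nonneg.eq_or_lt with rfl | hδ
  · have hm₂ : 0 < m₂ := by linarith
    rw [hw, if_pos rfl]
    constructor
    · rw [le_sub_iff_add_le, ← le_sub_iff_add_le', div_le_iff₀ hm₂]
      linarith
    · linarith [div_pos (pow_pos hm₁_pos 2) hm₂]
  · have hroot : w = (-(m₂ - 2 * δ * m₁) + √(discrim (δ ^ 2) (m₂ - 2 * δ * m₁) (m₁ ^ 2 - m₂)))
        / (2 * δ ^ 2) := by
      rw [hw, if_neg hδ.ne', discrim]
      ring_nf
    rw [hroot]
    exact ⟨le_quadratic_root (by positivity) hquad,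
      quadratic_root_lt (by positivity) (by nlinarith) (by nlinarith)⟩

theorem prob_le_delta_bound
    {Ω : Type*} [MeasurableSpace Ω] (μ : Measure Ω) [IsProbabilityMeasure μ]
    (y : Ω → ℝ) (hy_meas : Measurable y) (hy_nonneg : ∀ ω, 0 ≤ y ω)
    (hy_int : Integrable y μ)
    (hy_sq_int : Integrable (fun ω => (y ω) ^ 2) μ)
    (m₁ m₂ : ℝ)
    (hm₁ : m₁ = ∫ ω, y ω ∂μ)
    (hm₂ : m₂ = ∫ ω, (y ω) ^ 2 ∂μ)
    (hm₁_pos : 0 < m₁)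
    (δ : ℝ) (hδ_nonneg : 0 ≤ δ) (hδ_lt : δ < min (m₂ / (2 * m₁)) m₁)
    (w : ℝ)
    (hw : w = if δ = 0 then 1 - m₁ ^ 2 / m₂
        else (-m₂ + 2 * δ * m₁ + Real.sqrt (m₂ ^ 2 - 4 * δ * m₂ * (m₁ - δ))) / (2 * δ ^ 2)) :
    0 ≤ w ∧ w < 1 ∧ μ {ω | y ω ≤ δ} ≤ ENNReal.ofReal w :=
  prob_le_delta_bound_general μ y hy_int hy_sq_int m₁ m₂ hm₁ hm₂ hm₁_pos δ hδ_nonneg hδ_lt w hw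
end

section
/- Let a₁ = diag(1,4) and a₂ = diag(2,1) in M₂(ℂ), and let D = diag(2,1). For every pair of unitary matrices U, V ∈ U(2), there exists t ∈ [0,1] such that the 4×4 Hermitian matrix a₁⊗(U D U*) + a₂⊗(V D V*) has the same characteristic polynomial (equivalently, the same eigenvalues with multiplicity) as R_t := a₁⊗diag(1,2) + a₂⊗C_t, where C_t is the 2×2 matrix with rows (1+t, √(t(1−t))) and (√(t(1−t)), 2−t). -/
/- STATEMENT 11 (Example 4.3): With a₁ = diag(1,4), a₂ = diag(2,1), D = diag(2,1), every
matrix a₁⊗(U D U*) + a₂⊗(V D V*) with U, V ∈ U(2) has the same characteristic polynomial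
as R_t for some t ∈ [0,1], where R_t = a₁⊗diag(1,2) + a₂⊗C_t and
C_t = [[1+t, √(t(1−t))], [√(t(1−t)), 2−t]]. -/

open Matrix
open scoped Kronecker

noncomputable section

def a1 : Matrix (Fin 2) (Fin 2) ℂ := !![1, 0; 0, 4]

def a2 : Matrix (Fin 2) (Fin 2) ℂ := !![2, 0; 0, 1]

def Dmat : Matrix (Fin 2) (Fin 2) ℂ := !![2, 0; 0, 1]

/-- C_t, the rank-parametrized conjugate of diag(2,1). -/
def Ct (t : ℝ) : Matrix (Fin 2) (Fin 2) ℂ :=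
  !![((1 + t : ℝ) : ℂ), ((Real.sqrt (t * (1 - t)) : ℝ) : ℂ);
     ((Real.sqrt (t * (1 - t)) : ℝ) : ℂ), ((2 - t : ℝ) : ℂ)]

/-- R_t = a₁ ⊗ diag(1,2) + a₂ ⊗ C_t. -/
def Rt (t : ℝ) : Matrix (Fin 2 × Fin 2) (Fin 2 × Fin 2) ℂ :=
  a1 ⊗ₖ (!![1, 0; 0, 2] : Matrix (Fin 2) (Fin 2) ℂ) + a2 ⊗ₖ Ct t

namespace Ex43

open Polynomial

lemma charpoly_fin_two' (M : Matrix (Fin 2) (Fin 2) ℂ) :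
    M.charpoly = X^2 - C M.trace * X + C M.det := by
  rw [Matrix.charpoly, det_fin_two, charmatrix_apply_eq, charmatrix_apply_eq,
    charmatrix_apply_ne _ _ _ (by decide), charmatrix_apply_ne _ _ _ (by decide),
    trace_fin_two, det_fin_two]
  simp [map_add, map_sub, _root_.map_mul]; ring

lemma charpoly_blockDiag (f : Fin 2 → Matrix (Fin 2) (Fin 2) ℂ) :
    (blockDiagonal f).charpoly = (f 0).charpoly * (f 1).charpoly := by
  have h : charmatrix (blockDiagonal f) = blockDiagonal fun k => charmatrix (f k) := by
    ext ⟨i, k⟩ ⟨j, l⟩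
    by_cases hkl : k = l
    · subst hkl
      by_cases hij : i = j
      · subst hij
        simp [blockDiagonal_apply]
      · rw [charmatrix_apply_ne _ _ _ (by simp [Prod.ext_iff, hij])]
        simp [blockDiagonal_apply, charmatrix_apply_ne _ _ _ hij]
    · rw [charmatrix_apply_ne _ _ _ (by simp [Prod.ext_iff, hkl])]
      simp [blockDiagonal_apply, hkl]
  rw [Matrix.charpoly, h, det_blockDiagonal, Fin.prod_univ_two]
  rfl

lemma det_add_fin_two (A B : Matrix (Fin 2) (Fin 2) ℂ) :
    det (A + B) = det A + det B + trace A * trace B - trace (A * B) := by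
  simp [det_fin_two, trace_fin_two, mul_apply, Fin.sum_univ_two]
  ring

lemma kron_charpoly (M N : Matrix (Fin 2) (Fin 2) ℂ) :
    (a1 ⊗ₖ M + a2 ⊗ₖ N).charpoly
      = (M + (2:ℂ) • N).charpoly * ((4:ℂ) • M + N).charpoly := by
  have h : a1 ⊗ₖ M + a2 ⊗ₖ N
      = reindex (Equiv.prodComm (Fin 2) (Fin 2)) (Equiv.prodComm (Fin 2) (Fin 2))
          (blockDiagonal ![M + (2:ℂ) • N, (4:ℂ) • M + N]) := by
    ext ⟨i, j⟩ ⟨k, l⟩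
    fin_cases i <;> fin_cases k <;>
      simp [a1, a2, blockDiagonal_apply, Matrix.smul_apply, kroneckerMap_apply,
        Equiv.prodComm, reindex_apply, submatrix_apply]
  rw [h, Matrix.charpoly_reindex, charpoly_blockDiag]
  simp

end Ex43

open Ex43 Polynomial in
theorem exists_t_same_charpoly (U V : Matrix.unitaryGroup (Fin 2) ℂ) :
    ∃ t ∈ Set.Icc (0 : ℝ) 1,
      (a1 ⊗ₖ ((U : Matrix (Fin 2) (Fin 2) ℂ) * Dmat * (U : Matrix (Fin 2) (Fin 2) ℂ)ᴴ) +
        a2 ⊗ₖ ((V : Matrix (Fin 2) (Fin 2) ℂ) * Dmat * (V : Matrix (Fin 2) (Fin 2) ℂ)ᴴ)).charpoly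
        = (Rt t).charpoly := by
  set Umat := (U : Matrix (Fin 2) (Fin 2) ℂ) with hUdef
  set Vmat := (V : Matrix (Fin 2) (Fin 2) ℂ) with hVdef
  have hU1 : Umatᴴ * Umat = 1 := by
    simpa [Matrix.star_eq_conjTranspose] using Matrix.UnitaryGroup.star_mul_self U
  have hU2 : Umat * Umatᴴ = 1 := by
    have := (Matrix.mem_unitaryGroup_iff.mp U.2)
    simpa [Matrix.star_eq_conjTranspose] using this
  have hV1 : Vmatᴴ * Vmat = 1 := by
    simpa [Matrix.star_eq_conjTranspose] using Matrix.UnitaryGroup.star_mul_self V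
  have hV2 : Vmat * Vmatᴴ = 1 := by
    have := (Matrix.mem_unitaryGroup_iff.mp V.2)
    simpa [Matrix.star_eq_conjTranspose] using this
  set W := Umatᴴ * Vmat with hWdef
  have hWH : Wᴴ = Vmatᴴ * Umat := by
    rw [hWdef, conjTranspose_mul, conjTranspose_conjTranspose]
  have hWl : Wᴴ * W = 1 := by
    rw [hWH, hWdef, mul_assoc, ← mul_assoc Umat, hU2, one_mul, hV1]
  have hWr : W * Wᴴ = 1 := by
    rw [hWH, hWdef, mul_assoc, ← mul_assoc Vmat, hV2, one_mul, hU1]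
  have hUW : Umat * W = Vmat := by
    rw [hWdef, ← mul_assoc, hU2, one_mul]
  -- the parameter
  set c : ℝ := Complex.normSq (W 0 0) with hcdef
  have hcW : W 0 0 * (starRingEnd ℂ) (W 0 0) = (c : ℂ) := Complex.mul_conj _
  -- entry identities from unitarity of W
  have e1 : W 0 0 * (starRingEnd ℂ) (W 0 0) + W 0 1 * (starRingEnd ℂ) (W 0 1) = 1 := by
    simpa [mul_apply, conjTranspose_apply, Fin.sum_univ_two, one_apply, Complex.star_def]
      using congrFun (congrFun hWr 0) 0
  have e2 : W 1 0 * (starRingEnd ℂ) (W 1 0) + W 1 1 * (starRingEnd ℂ) (W 1 1) = 1 := by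
    simpa [mul_apply, conjTranspose_apply, Fin.sum_univ_two, one_apply, Complex.star_def]
      using congrFun (congrFun hWr 1) 1
  have f1 : (starRingEnd ℂ) (W 0 0) * W 0 0 + (starRingEnd ℂ) (W 1 0) * W 1 0 = 1 := by
    simpa [mul_apply, conjTranspose_apply, Fin.sum_univ_two, one_apply, Complex.star_def]
      using congrFun (congrFun hWl 0) 0
  have hc0 : 0 ≤ c := Complex.normSq_nonneg _
  have hc1 : c ≤ 1 := by
    have h10 : 0 ≤ Complex.normSq (W 1 0) := Complex.normSq_nonneg _
    have : (c : ℂ) + (Complex.normSq (W 1 0) : ℂ) = 1 := by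
      rw [← hcW, ← Complex.mul_conj (W 1 0)]
      linear_combination f1
    have : c + Complex.normSq (W 1 0) = 1 := by
      exact_mod_cast this
    linarith
  set P := W * Dmat * Wᴴ with hPdef
  have htrD : trace Dmat = 3 := by norm_num [Dmat, trace_fin_two]
  have hdetD : det Dmat = 2 := by norm_num [Dmat, det_fin_two]
  have htrP : trace P = 3 := by
    rw [hPdef, Matrix.trace_mul_cycle W Dmat Wᴴ, hWl, one_mul, htrD]
  have hdetP : det P = 2 := by
    have hdW : det W * det Wᴴ = 1 := by rw [← det_mul, hWr, det_one]
    rw [hPdef, det_mul, det_mul, hdetD]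
    linear_combination (2:ℂ) * hdW
  have htrDP : trace (Dmat * P) = 4 + (c : ℂ) := by
    rw [hPdef]
    simp only [trace_fin_two, mul_apply, conjTranspose_apply, Fin.sum_univ_two,
      Complex.star_def]
    norm_num [Dmat]
    linear_combination 2*e1 + e2 + f1 + hcW
  -- conjugation invariance
  have key : ∀ (B : Matrix (Fin 2) (Fin 2) ℂ),
      Umat * (W * B * Wᴴ) * Umatᴴ = Vmat * B * Vmatᴴ := by
    intro B
    rw [← mul_assoc Umat (W * B) Wᴴ, ← mul_assoc Umat W B, hUW,
      mul_assoc (Vmat * B) Wᴴ Umatᴴ, ← conjTranspose_mul, hUW]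
  have hconjdet : ∀ (B : Matrix (Fin 2) (Fin 2) ℂ), det (Umat * B * Umatᴴ) = det B := by
    intro B
    have h1 : det Umat * det Umatᴴ = 1 := by rw [← det_mul, hU2, det_one]
    rw [det_mul, det_mul]
    linear_combination det B * h1
  have hconjtr : ∀ (B : Matrix (Fin 2) (Fin 2) ℂ), trace (Umat * B * Umatᴴ) = trace B := by
    intro B
    rw [Matrix.trace_mul_cycle, hU1, one_mul]
  -- block identities
  have hB1 : Umat * Dmat * Umatᴴ + (2:ℂ) • (Vmat * Dmat * Vmatᴴ)
      = Umat * (Dmat + (2:ℂ) • P) * Umatᴴ := by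
    rw [mul_add, add_mul, hPdef, mul_smul_comm, smul_mul_assoc, key]
  have hB2 : (4:ℂ) • (Umat * Dmat * Umatᴴ) + Vmat * Dmat * Vmatᴴ
      = Umat * ((4:ℂ) • Dmat + P) * Umatᴴ := by
    rw [mul_add, add_mul, hPdef, mul_smul_comm, smul_mul_assoc, key]
  have htr1 : trace (Umat * Dmat * Umatᴴ + (2:ℂ) • (Vmat * Dmat * Vmatᴴ)) = 9 := by
    rw [hB1, hconjtr, trace_add, trace_smul, htrD, htrP]
    norm_num
  have htr2 : trace ((4:ℂ) • (Umat * Dmat * Umatᴴ) + Vmat * Dmat * Vmatᴴ) = 15 := by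
    rw [hB2, hconjtr, trace_add, trace_smul, htrD, htrP]
    norm_num
  have hdet1 : det (Umat * Dmat * Umatᴴ + (2:ℂ) • (Vmat * Dmat * Vmatᴴ))
      = 20 - 2 * (c : ℂ) := by
    rw [hB1, hconjdet, det_add_fin_two]
    simp only [mul_smul_comm, trace_smul, det_smul]
    rw [hdetD, hdetP, htrD, htrP, htrDP]
    simp [smul_eq_mul, Fintype.card_fin]
    ring
  have hdet2 : det ((4:ℂ) • (Umat * Dmat * Umatᴴ) + Vmat * Dmat * Vmatᴴ)
      = 54 - 4 * (c : ℂ) := by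
    rw [hB2, hconjdet, det_add_fin_two]
    simp only [smul_mul_assoc, trace_smul, det_smul]
    rw [hdetD, hdetP, htrD, htrP, htrDP]
    simp [smul_eq_mul, Fintype.card_fin]
    ring
  -- the parameter t
  refine ⟨1 - c, ⟨by linarith, by linarith⟩, ?_⟩
  set t : ℝ := 1 - c with htdef
  have ht0 : 0 ≤ t := by rw [htdef]; linarith
  have ht1 : t ≤ 1 := by rw [htdef]; linarith
  have hs : ((Real.sqrt (t * (1 - t)) : ℝ) : ℂ) * ((Real.sqrt (t * (1 - t)) : ℝ) : ℂ)
      = (t : ℂ) * (1 - (t : ℂ)) := by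
    rw [← Complex.ofReal_mul, Real.mul_self_sqrt (mul_nonneg ht0 (by linarith))]
    push_cast
    ring
  have hct : (c : ℂ) = 1 - (t : ℂ) := by
    rw [htdef]
    push_cast
    ring
  -- compute the RHS blocks
  have hRtr1 : trace ((!![1, 0; 0, 2] : Matrix (Fin 2) (Fin 2) ℂ) + (2:ℂ) • Ct t) = 9 := by
    simp [Ct, trace_fin_two]
    push_cast
    ring
  have hRtr2 : trace ((4:ℂ) • (!![1, 0; 0, 2] : Matrix (Fin 2) (Fin 2) ℂ) + Ct t) = 15 := by
    simp [Ct, trace_fin_two]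
    push_cast
    ring
  have hRdet1 : det ((!![1, 0; 0, 2] : Matrix (Fin 2) (Fin 2) ℂ) + (2:ℂ) • Ct t)
      = 20 - 2 * (c : ℂ) := by
    simp [Ct, det_fin_two]
    rw [hct]
    push_cast
    linear_combination (-4:ℂ) * hs
  have hRdet2 : det ((4:ℂ) • (!![1, 0; 0, 2] : Matrix (Fin 2) (Fin 2) ℂ) + Ct t)
      = 54 - 4 * (c : ℂ) := by
    simp [Ct, det_fin_two]
    rw [hct]
    push_cast
    linear_combination (-1:ℂ) * hs
  rw [Rt, kron_charpoly, kron_charpoly, charpoly_fin_two', charpoly_fin_two',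
    charpoly_fin_two', charpoly_fin_two', htr1, htr2, hdet1, hdet2,
    hRtr1, hRtr2, hRdet1, hRdet2]


end
end

section
/- For t ∈ [0,1], let R_t = a₁⊗diag(1,2) + a₂⊗C_t, where a₁ = diag(1,4), a₂ = diag(2,1) ∈ M₂(ℂ) and C_t is the 2×2 matrix with rows (1+t, √(t(1−t))) and (√(t(1−t)), 2−t). Then the multiset of eigenvalues of the 4×4 Hermitian matrix R_t is { 15/2 + (1/2)√(25−16t), 15/2 − (1/2)√(25−16t), 9/2 + (1/2)√(9−8t), 9/2 − (1/2)√(9−8t) }; equivalently, the characteristic polynomial of R_t is (X² − 15X + 50 + 4t)(X² − 9X + 18 + 2t). -/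
/- STATEMENT 12 (Example 4.3): The eigenvalues of R_t (with multiplicity) are
15/2 ± (1/2)√(25−16t) and 9/2 ± (1/2)√(9−8t); equivalently the characteristic polynomial
of R_t is (X² − 15X + 50 + 4t)(X² − 9X + 18 + 2t). -/

open Matrix Polynomial
open scoped Kronecker

noncomputable section

/-- Auxiliary: charpoly of a block diagonal matrix is the product of block charpolys. -/
lemma charpoly_blockDiag {n : Type*} [DecidableEq n] [Fintype n]
    (M : n → Matrix (Fin 2) (Fin 2) ℂ) :
    (Matrix.blockDiagonal M).charpoly = ∏ k, (M k).charpoly := by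
  have h : charmatrix (Matrix.blockDiagonal M)
      = Matrix.blockDiagonal (fun k => charmatrix (M k)) := by
    ext ⟨i, k⟩ ⟨j, l⟩
    by_cases hkl : k = l
    · subst hkl
      by_cases hij : i = j
      · subst hij; simp [charmatrix_apply, Matrix.blockDiagonal_apply]
      · simp [charmatrix_apply, Matrix.blockDiagonal_apply, hij, Prod.ext_iff]
    · simp [charmatrix_apply, Matrix.blockDiagonal_apply, hkl, Prod.ext_iff]
  rw [Matrix.charpoly, h, Matrix.det_blockDiagonal]
  rfl

/-- Auxiliary: charpoly of an explicit 2×2 matrix. -/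
lemma charpoly_two (a b c d : ℂ) :
    (!![a, b; c, d] : Matrix (Fin 2) (Fin 2) ℂ).charpoly
      = X ^ 2 - C (a + d) * X + C (a * d - b * c) := by
  rw [Matrix.charpoly, Matrix.det_fin_two]
  simp [charmatrix_apply]
  ring

/-- The diagonal blocks of `Rt`. -/
def Bk (t : ℝ) : Fin 2 → Matrix (Fin 2) (Fin 2) ℂ :=
  ![!![((3 + 2*t : ℝ) : ℂ), ((2 * Real.sqrt (t * (1 - t)) : ℝ) : ℂ);
      ((2 * Real.sqrt (t * (1 - t)) : ℝ) : ℂ), ((6 - 2*t : ℝ) : ℂ)],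
    !![((5 + t : ℝ) : ℂ), ((Real.sqrt (t * (1 - t)) : ℝ) : ℂ);
      ((Real.sqrt (t * (1 - t)) : ℝ) : ℂ), ((10 - t : ℝ) : ℂ)]]

lemma Rt_eq_blockDiag (t : ℝ) :
    Rt t = Matrix.reindex (Equiv.prodComm (Fin 2) (Fin 2))
      (Equiv.prodComm (Fin 2) (Fin 2)) (Matrix.blockDiagonal (Bk t)) := by
  ext ⟨i, k⟩ ⟨j, l⟩
  fin_cases i <;> fin_cases k <;> fin_cases j <;> fin_cases l <;>
    simp [Rt, a1, a2, Ct, Bk, Matrix.blockDiagonal_apply] <;> ring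

lemma quad_factor (a b s : ℂ) (hs : s ^ 2 = a ^ 2 - b) :
    X ^ 2 - C (2 * a) * X + C b = (X - C (a + s)) * (X - C (a - s)) := by
  have : b = (a + s) * (a - s) := by
    have : (a + s) * (a - s) = a ^ 2 - s ^ 2 := by ring
    rw [this, hs]; ring
  rw [this]
  simp only [C_mul, C_add, C_sub, map_ofNat]
  ring

theorem Rt_eigenvalues (t : ℝ) (ht : t ∈ Set.Icc (0 : ℝ) 1) :
    (Rt t).charpoly.roots =
      ({((15 / 2 + Real.sqrt (25 - 16 * t) / 2 : ℝ) : ℂ),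
        ((15 / 2 - Real.sqrt (25 - 16 * t) / 2 : ℝ) : ℂ),
        ((9 / 2 + Real.sqrt (9 - 8 * t) / 2 : ℝ) : ℂ),
        ((9 / 2 - Real.sqrt (9 - 8 * t) / 2 : ℝ) : ℂ)} : Multiset ℂ) ∧
    (Rt t).charpoly =
      (X ^ 2 - C (15 : ℂ) * X + C (((50 : ℝ) + 4 * t : ℝ) : ℂ)) *
      (X ^ 2 - C (9 : ℂ) * X + C (((18 : ℝ) + 2 * t : ℝ) : ℂ)) := by
  obtain ⟨ht0, ht1⟩ := ht
  have hnn : 0 ≤ t * (1 - t) := mul_nonneg ht0 (by linarith)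
  have hs2 : Real.sqrt (t * (1 - t)) ^ 2 = t * (1 - t) := Real.sq_sqrt hnn
  set s : ℝ := Real.sqrt (t * (1 - t)) with hs
  -- the characteristic polynomial
  have hcp : (Rt t).charpoly =
      (X ^ 2 - C (15 : ℂ) * X + C (((50 : ℝ) + 4 * t : ℝ) : ℂ)) *
      (X ^ 2 - C (9 : ℂ) * X + C (((18 : ℝ) + 2 * t : ℝ) : ℂ)) := by
    rw [Rt_eq_blockDiag, Matrix.charpoly_reindex, charpoly_blockDiag,
      Fin.prod_univ_two]
    show (Bk t 0).charpoly * (Bk t 1).charpoly = _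
    have h0 : Bk t 0 = !![((3 + 2*t : ℝ) : ℂ), ((2 * s : ℝ) : ℂ);
        ((2 * s : ℝ) : ℂ), ((6 - 2*t : ℝ) : ℂ)] := rfl
    have h1 : Bk t 1 = !![((5 + t : ℝ) : ℂ), ((s : ℝ) : ℂ);
        ((s : ℝ) : ℂ), ((10 - t : ℝ) : ℂ)] := rfl
    rw [h0, h1, charpoly_two, charpoly_two]
    have e1 : ((3 + 2*t : ℝ) : ℂ) + ((6 - 2*t : ℝ) : ℂ) = 9 := by push_cast; ring
    have e2 : ((3 + 2*t : ℝ) : ℂ) * ((6 - 2*t : ℝ) : ℂ)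
        - ((2 * s : ℝ) : ℂ) * ((2 * s : ℝ) : ℂ) = (((18 : ℝ) + 2 * t : ℝ) : ℂ) := by
      have : (3 + 2*t) * (6 - 2*t) - (2 * s) * (2 * s) = (18 : ℝ) + 2 * t := by
        nlinarith [hs2]
      exact_mod_cast congrArg (Complex.ofReal) this
    have e3 : ((5 + t : ℝ) : ℂ) + ((10 - t : ℝ) : ℂ) = 15 := by push_cast; ring
    have e4 : ((5 + t : ℝ) : ℂ) * ((10 - t : ℝ) : ℂ)
        - ((s : ℝ) : ℂ) * ((s : ℝ) : ℂ) = (((50 : ℝ) + 4 * t : ℝ) : ℂ) := by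
      have : (5 + t) * (10 - t) - s * s = (50 : ℝ) + 4 * t := by nlinarith [hs2]
      exact_mod_cast congrArg (Complex.ofReal) this
    rw [e1, e2, e3, e4, mul_comm]
  refine ⟨?_, hcp⟩
  -- factor the two quadratics
  have h25 : (0 : ℝ) ≤ 25 - 16 * t := by linarith
  have h9 : (0 : ℝ) ≤ 9 - 8 * t := by linarith
  have hf1 : (X ^ 2 - C (15 : ℂ) * X + C (((50 : ℝ) + 4 * t : ℝ) : ℂ))
      = (X - C ((15 / 2 + Real.sqrt (25 - 16 * t) / 2 : ℝ) : ℂ))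
        * (X - C ((15 / 2 - Real.sqrt (25 - 16 * t) / 2 : ℝ) : ℂ)) := by
    have := quad_factor ((15 / 2 : ℝ) : ℂ) (((50 : ℝ) + 4 * t : ℝ) : ℂ)
      ((Real.sqrt (25 - 16 * t) / 2 : ℝ) : ℂ) ?_
    · rw [show (C (15 : ℂ)) = C (2 * ((15 / 2 : ℝ) : ℂ)) by norm_num, this]
      norm_cast
    · have hr : (Real.sqrt (25 - 16 * t) / 2) ^ 2 = (15 / 2 : ℝ) ^ 2 - ((50 : ℝ) + 4 * t) := by
        rw [div_pow, Real.sq_sqrt h25]; ring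
      exact_mod_cast congrArg (Complex.ofReal) hr
  have hf2 : (X ^ 2 - C (9 : ℂ) * X + C (((18 : ℝ) + 2 * t : ℝ) : ℂ))
      = (X - C ((9 / 2 + Real.sqrt (9 - 8 * t) / 2 : ℝ) : ℂ))
        * (X - C ((9 / 2 - Real.sqrt (9 - 8 * t) / 2 : ℝ) : ℂ)) := by
    have := quad_factor ((9 / 2 : ℝ) : ℂ) (((18 : ℝ) + 2 * t : ℝ) : ℂ)
      ((Real.sqrt (9 - 8 * t) / 2 : ℝ) : ℂ) ?_
    · rw [show (C (9 : ℂ)) = C (2 * ((9 / 2 : ℝ) : ℂ)) by norm_num, this]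
      norm_cast
    · have hr : (Real.sqrt (9 - 8 * t) / 2) ^ 2 = (9 / 2 : ℝ) ^ 2 - ((18 : ℝ) + 2 * t) := by
        rw [div_pow, Real.sq_sqrt h9]; ring
      exact_mod_cast congrArg (Complex.ofReal) hr
  rw [hcp, hf1, hf2]
  rw [show (X - C ((15 / 2 + Real.sqrt (25 - 16 * t) / 2 : ℝ) : ℂ))
        * (X - C ((15 / 2 - Real.sqrt (25 - 16 * t) / 2 : ℝ) : ℂ))
        * ((X - C ((9 / 2 + Real.sqrt (9 - 8 * t) / 2 : ℝ) : ℂ))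
        * (X - C ((9 / 2 - Real.sqrt (9 - 8 * t) / 2 : ℝ) : ℂ)))
      = (X - C ((15 / 2 + Real.sqrt (25 - 16 * t) / 2 : ℝ) : ℂ))
        * ((X - C ((15 / 2 - Real.sqrt (25 - 16 * t) / 2 : ℝ) : ℂ))
        * ((X - C ((9 / 2 + Real.sqrt (9 - 8 * t) / 2 : ℝ) : ℂ))
        * (X - C ((9 / 2 - Real.sqrt (9 - 8 * t) / 2 : ℝ) : ℂ)))) by ring]
  rw [roots_mul (by
      refine mul_ne_zero (X_sub_C_ne_zero _) (mul_ne_zero (X_sub_C_ne_zero _)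
        (mul_ne_zero (X_sub_C_ne_zero _) (X_sub_C_ne_zero _)))),
    roots_mul (by
      refine mul_ne_zero (X_sub_C_ne_zero _)
        (mul_ne_zero (X_sub_C_ne_zero _) (X_sub_C_ne_zero _))),
    roots_mul (mul_ne_zero (X_sub_C_ne_zero _) (X_sub_C_ne_zero _)),
    roots_X_sub_C, roots_X_sub_C, roots_X_sub_C, roots_X_sub_C]
  rfl

end
end

section
/- Let a₁ = diag(1,4), a₂ = diag(2,1) ∈ M₂(ℂ) and D = diag(2,1). The set K ⊆ ℝ⁴ of all nonincreasing 4-tuples (γ₁ ≥ γ₂ ≥ γ₃ ≥ γ₄) that occur as the eigenvalue sequence of a₁⊗(U D U*) + a₂⊗(V D V*) for some unitaries U, V ∈ U(2) is not a convex subset of ℝ⁴. -/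
/- STATEMENT 14 (Example 4.3, punchline): With a₁ = diag(1,4), a₂ = diag(2,1), D = diag(2,1),
the set of nonincreasing 4-tuples arising as eigenvalue sequences of
a₁⊗(U D U*) + a₂⊗(V D V*), for U, V ∈ U(2), is not convex in ℝ⁴. -/

open Matrix Polynomial
open scoped Kronecker

noncomputable section

/-- The quantum Horn body K^{a₁,a₂}_{(2,1),(2,1)}, as a set of nonincreasing eigenvalue
4-tuples: γ is the eigenvalue sequence of a₁⊗(UDU*) + a₂⊗(VDV*) iff the characteristic
polynomial of that matrix is ∏ᵢ (X − γᵢ). -/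
def quantumHornBody : Set (Fin 4 → ℝ) :=
  {γ | Antitone γ ∧
    ∃ U V : Matrix.unitaryGroup (Fin 2) ℂ,
      (a1 ⊗ₖ ((U : Matrix (Fin 2) (Fin 2) ℂ) * Dmat * (U : Matrix (Fin 2) (Fin 2) ℂ)ᴴ) +
        a2 ⊗ₖ ((V : Matrix (Fin 2) (Fin 2) ℂ) * Dmat *
          (V : Matrix (Fin 2) (Fin 2) ℂ)ᴴ)).charpoly
        = ∏ i : Fin 4, (X - C ((γ i : ℝ) : ℂ))}

/-
The characteristic polynomial of `a₁ ⊗ B + a₂ ⊗ C` is `χ(B + 2C) · χ(4B + C)`, since `a₁, a₂` are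
diagonal. For `B = UDU*`, `C = VDV*` the first factor has trace `3 + 2·3 = 9`, so any
`γ ∈ K` has two entries (the roots of that factor) summing to `9`. Taking `U = V = 1`, resp.
`U = 1` and `V` the swap, puts `(10, 6, 5, 3)` and `(9, 6, 5, 4)` in `K`, but no two entries of
their midpoint `(19/2, 6, 5, 7/2)` sum to `9`.
-/

theorem Multiset.exists_ne_of_pair_le_map {ι α : Type*} {s : Finset ι} {f : ι → α} {x y : α}
    (h : {x, y} ≤ s.val.map f) : ∃ i ∈ s, ∃ j ∈ s, i ≠ j ∧ f i = x ∧ f j = y := by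
  classical
  obtain ⟨i, hi, rfl⟩ := Multiset.mem_map.mp
    (Multiset.mem_of_le h (by simp : x ∈ ({x, y} : Multiset α)))
  rw [← Finset.insert_erase hi, Finset.insert_val_of_notMem (Finset.notMem_erase i s),
    Multiset.map_cons, Multiset.insert_eq_cons, Multiset.cons_le_cons_iff,
    Multiset.singleton_le, Multiset.mem_map] at h
  obtain ⟨j, hj, rfl⟩ := h
  obtain ⟨hji, hj⟩ := Finset.mem_erase.mp hj
  exact ⟨i, hi, j, hj, hji.symm, rfl, rfl⟩

theorem Polynomial.exists_ne_add_eq_neg_nextCoeff_of_dvd_prod {R ι : Type*} [CommRing R]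
    [IsDomain R] [Fintype ι] {p : R[X]} (hp : p.Monic) (hdeg : p.natDegree = 2) {γ : ι → R}
    (hdvd : p ∣ ∏ i, (X - C (γ i))) : ∃ i j, i ≠ j ∧ γ i + γ j = -p.nextCoeff := by
  have hprod : (∏ i, (X - C (γ i))).Splits := Splits.prod fun i _ => Splits.X_sub_C (γ i)
  have hprod0 : ∏ i, (X - C (γ i)) ≠ 0 :=
    (monic_prod_of_monic _ _ fun i _ => monic_X_sub_C (γ i)).ne_zero
  have hsplit : p.Splits := hprod.of_dvd hprod0 hdvd
  have hroots : p.roots ≤ Finset.univ.val.map γ := by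
    simpa [roots_prod _ _ hprod0, roots_X_sub_C] using roots.le_of_dvd hprod0 hdvd
  obtain ⟨x, y, hxy⟩ := Multiset.card_eq_two.mp (hsplit.natDegree_eq_card_roots ▸ hdeg)
  obtain ⟨i, -, j, -, hij, rfl, rfl⟩ := Multiset.exists_ne_of_pair_le_map (hxy ▸ hroots)
  refine ⟨i, j, hij, ?_⟩
  rw [hsplit.nextCoeff_eq_neg_sum_roots_of_monic hp, hxy]
  simp

theorem Matrix.charpoly_blockDiagonal {R n o : Type*} [CommRing R] [Fintype n] [DecidableEq n]
    [Fintype o] [DecidableEq o] (M : o → Matrix n n R) :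
    (blockDiagonal M).charpoly = ∏ k, (M k).charpoly := by
  have : charmatrix (blockDiagonal M) = blockDiagonal fun k => charmatrix (M k) := by
    ext ⟨i, k⟩ ⟨j, k'⟩
    by_cases hk : k = k' <;> by_cases hij : i = j <;> simp [blockDiagonal_apply, hk, hij]
  rw [charpoly, this, det_blockDiagonal]
  rfl

theorem Matrix.charpoly_diagonal_kronecker_add {R ι n : Type*} [CommRing R] [Fintype ι]
    [DecidableEq ι] [Fintype n] [DecidableEq n] (a b : ι → R) (B C : Matrix n n R) :
    (diagonal a ⊗ₖ B + diagonal b ⊗ₖ C).charpoly = ∏ i, (a i • B + b i • C).charpoly := by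
  have : diagonal a ⊗ₖ B + diagonal b ⊗ₖ C = reindex (Equiv.prodComm n ι) (Equiv.prodComm n ι)
      (blockDiagonal fun i => a i • B + b i • C) := by
    rw [diagonal_kronecker, diagonal_kronecker]
    exact congrArg (reindex _ _) (blockDiagonal_add (fun i => a i • B) fun i => b i • C) |>.symm
  rw [this, charpoly_reindex, charpoly_blockDiagonal]

theorem Matrix.trace_unitary_conj {R n : Type*} [CommRing R] [StarRing R] [Fintype n]
    [DecidableEq n] (U : unitaryGroup n R) (A : Matrix n n R) :
    ((U : Matrix n n R) * A * (U : Matrix n n R)ᴴ).trace = A.trace := by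
  rw [trace_mul_cycle, ← star_eq_conjTranspose, UnitaryGroup.star_mul_self, one_mul]

theorem a1_eq_diagonal : a1 = diagonal ![1, 4] := (diagonal_vec2 _ _).symm

theorem a2_eq_diagonal : a2 = diagonal ![2, 1] := (diagonal_vec2 _ _).symm

theorem Dmat_eq_diagonal : Dmat = diagonal ![2, 1] := (diagonal_vec2 _ _).symm

theorem charpoly_a1_kronecker_add_a2_kronecker (B C : Matrix (Fin 2) (Fin 2) ℂ) :
    (a1 ⊗ₖ B + a2 ⊗ₖ C).charpoly = (B + (2 : ℂ) • C).charpoly * ((4 : ℂ) • B + C).charpoly := by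
  rw [a1_eq_diagonal, a2_eq_diagonal, charpoly_diagonal_kronecker_add, Fin.prod_univ_two]
  simp

theorem trace_unitary_conj_Dmat (U : unitaryGroup (Fin 2) ℂ) :
    ((U : Matrix (Fin 2) (Fin 2) ℂ) * Dmat * (U : Matrix (Fin 2) (Fin 2) ℂ)ᴴ).trace = 3 := by
  rw [trace_unitary_conj, Dmat_eq_diagonal, trace_diagonal, Fin.sum_univ_two]
  norm_num

theorem exists_add_eq_nine_of_mem_quantumHornBody {γ : Fin 4 → ℝ} (hγ : γ ∈ quantumHornBody) :
    ∃ i j, i ≠ j ∧ γ i + γ j = 9 := by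
  obtain ⟨-, U, V, hγ⟩ := hγ
  rw [charpoly_a1_kronecker_add_a2_kronecker] at hγ
  obtain ⟨i, j, hij, hsum⟩ := exists_ne_add_eq_neg_nextCoeff_of_dvd_prod (charpoly_monic _)
    (charpoly_natDegree_eq_dim _) (hγ ▸ dvd_mul_right _ _)
  rw [← trace_eq_neg_charpoly_nextCoeff, trace_add, trace_smul, trace_unitary_conj_Dmat,
    trace_unitary_conj_Dmat] at hsum
  refine ⟨i, j, hij, ?_⟩
  norm_num at hsum
  exact_mod_cast hsum

theorem mem_quantumHornBody_of_conj_eq_diagonal {γ : Fin 4 → ℝ} (hγ : Antitone γ)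
    (U V : unitaryGroup (Fin 2) ℂ) {d e : Fin 2 → ℂ}
    (hU : (U : Matrix (Fin 2) (Fin 2) ℂ) * Dmat * (U : Matrix (Fin 2) (Fin 2) ℂ)ᴴ = diagonal d)
    (hV : (V : Matrix (Fin 2) (Fin 2) ℂ) * Dmat * (V : Matrix (Fin 2) (Fin 2) ℂ)ᴴ = diagonal e)
    (h : (∏ i, (X - C (d i + 2 * e i))) * ∏ i, (X - C (4 * d i + e i)) =
      ∏ i, (X - C ((γ i : ℝ) : ℂ))) :
    γ ∈ quantumHornBody := by
  refine ⟨hγ, U, V, ?_⟩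
  rw [hU, hV, charpoly_a1_kronecker_add_a2_kronecker, ← diagonal_smul, ← diagonal_smul,
    diagonal_add, diagonal_add, charpoly_diagonal, charpoly_diagonal]
  exact h

theorem swap_mem_unitaryGroup : !![0, 1; 1, 0] ∈ unitaryGroup (Fin 2) ℂ := by
  rw [mem_unitaryGroup_iff, star_eq_conjTranspose]
  ext i j
  fin_cases i <;> fin_cases j <;> simp [mul_apply, Fin.sum_univ_two, one_apply]

theorem swap_conj_Dmat : !![0, 1; 1, 0] * Dmat * (!![0, 1; 1, 0] : Matrix (Fin 2) (Fin 2) ℂ)ᴴ =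
    diagonal ![1, 2] := by
  ext i j
  fin_cases i <;> fin_cases j <;> simp [Dmat, mul_apply, Fin.sum_univ_two]

theorem mem_quantumHornBody_10_6_5_3 : ![10, 6, 5, 3] ∈ quantumHornBody := by
  refine mem_quantumHornBody_of_conj_eq_diagonal (by simp; norm_num) 1 1 (d := ![2, 1])
    (e := ![2, 1]) (by simp [Dmat_eq_diagonal]) (by simp [Dmat_eq_diagonal]) ?_
  norm_num [Fin.prod_univ_four, cons_val_two, cons_val_three, map_ofNat]
  ring

theorem mem_quantumHornBody_9_6_5_4 : ![9, 6, 5, 4] ∈ quantumHornBody := by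
  refine mem_quantumHornBody_of_conj_eq_diagonal (by simp; norm_num) 1 ⟨_, swap_mem_unitaryGroup⟩
    (d := ![2, 1]) (e := ![1, 2]) (by simp [Dmat_eq_diagonal]) swap_conj_Dmat ?_
  norm_num [Fin.prod_univ_four, cons_val_two, cons_val_three, map_ofNat]
  ring

theorem quantumHornBody_not_convex : ¬ Convex ℝ quantumHornBody := by
  intro hconv
  have hmid := hconv mem_quantumHornBody_10_6_5_3 mem_quantumHornBody_9_6_5_4
    (by norm_num : (0 : ℝ) ≤ 1 / 2) (by norm_num : (0 : ℝ) ≤ 1 / 2) (by norm_num)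
  obtain ⟨i, j, -, hsum⟩ := exists_add_eq_nine_of_mem_quantumHornBody hmid
  fin_cases i <;> fin_cases j <;> norm_num at hsum
end
end
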